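/- Given a commutative ladder of abelian groups with exact rows A_i → B_i → C_i → D_i → E_i (with vertical maps from level i+1 to level i, for i ∈ ℤ_{≥0}): if (A_i) is a,b-surjective, (B_i) is a,c-injective, and (D_i) is (a+b),d-injective, then (C_i) is (a+b),(c+d)-injective. -/

import Mathlib

open CategoryTheory Opposite

/-- The transition map from level `j` to level `i` (for `i ≤ j`) of an inverse system of
abelian groups indexed by `ℕ`. -/
noncomputable def InvSys.trans (F : ℕᵒᵖ ⥤ AddCommGrpCat) {i j : ℕ} (h : i ≤ j) :
    F.obj (op j) → F.obj (op i) :=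
  F.map (homOfLE h).op

/-- `a,b`-injectivity of an inverse system of abelian groups. -/
def InvSys.IsInjective (F : ℕᵒᵖ ⥤ AddCommGrpCat) (a b : ℕ) : Prop :=
  ∀ c (_ : a ≤ c), ∀ x : F.obj (op (b + c)),
    InvSys.trans F (by omega : a ≤ b + c) x = 0 →
    InvSys.trans F (by omega : c ≤ b + c) x = 0

/-- `a,b`-surjectivity of an inverse system of abelian groups. -/
def InvSys.IsSurjective (F : ℕᵒᵖ ⥤ AddCommGrpCat) (a b : ℕ) : Prop :=
  ∀ c (_ : a ≤ c), ∀ x : F.obj (op c),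
    (∃ y : F.obj (op (b + c)), InvSys.trans F (by omega : c ≤ b + c) y = x) →
    ∀ d (_ : c ≤ d), ∃ z : F.obj (op d), InvSys.trans F (by omega : c ≤ d) z = x

/-! The classical chase, with levels tracked: an element `x` of `C` at level `c + d + e` that dies
at level `a + b` has, by the `(a+b),d`-injectivity of `D`, a restriction to level `c + e` killed
by `γ`, hence of the form `β y`. Then `β y` dies at level `a + b`, so `y` comes from `A` there;
the `a,b`-surjectivity of `A` lifts that preimage (restricted to level `a`) to some `w` at
level `c + e`, so `y - α w` dies at level `a`, and the `a,c`-injectivity of `B` makes it die at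
level `e`. Hence at level `e`, `x` is `β (α w) = 0`. -/

namespace InvSys

variable {A B C D : ℕᵒᵖ ⥤ AddCommGrpCat}

lemma trans_trans (F : ℕᵒᵖ ⥤ AddCommGrpCat) {i j k : ℕ} (hij : i ≤ j) (hjk : j ≤ k)
    (x : F.obj (op k)) : trans F hij (trans F hjk x) = trans F (hij.trans hjk) x := by
  simp only [trans]
  rw [← comp_apply, ← F.map_comp]
  rfl

lemma app_trans (τ : A ⟶ B) {i j : ℕ} (h : i ≤ j) (x : A.obj (op j)) :
    τ.app (op i) (trans A h x) = trans B h (τ.app (op j) x) := by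
  simp only [trans]
  rw [← comp_apply, τ.naturality, comp_apply]

lemma trans_sub (F : ℕᵒᵖ ⥤ AddCommGrpCat) {i j : ℕ} (h : i ≤ j) (x y : F.obj (op j)) :
    trans F h (x - y) = trans F h x - trans F h y :=
  map_sub (F.map (homOfLE h).op).hom x y

lemma IsInjective.trans_eq_zero {F : ℕᵒᵖ ⥤ AddCommGrpCat} {a b n m : ℕ}
    (hF : IsInjective F a b) (han : a ≤ n) (hnm : b + n ≤ m) (x : F.obj (op m))
    (hx : trans F (han.trans (by omega)) x = 0) : trans F (by omega : n ≤ m) x = 0 := by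
  have h := hF n han (trans F hnm x) (by rwa [trans_trans])
  rwa [trans_trans] at h

lemma IsInjective.trans_eq_of_trans_eq {F : ℕᵒᵖ ⥤ AddCommGrpCat} {a b n m : ℕ}
    (hF : IsInjective F a b) (han : a ≤ n) (hnm : b + n ≤ m) {x y : F.obj (op m)}
    (hxy : trans F (han.trans (by omega)) x = trans F (han.trans (by omega)) y) :
    trans F (by omega : n ≤ m) x = trans F (by omega : n ≤ m) y := by
  rw [← sub_eq_zero, ← trans_sub] at hxy ⊢
  exact hF.trans_eq_zero han hnm _ hxy

lemma IsSurjective.exists_trans_eq {F : ℕᵒᵖ ⥤ AddCommGrpCat} {a b n m : ℕ}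
    (hF : IsSurjective F a b) (hm : a + b ≤ m) (hn : a ≤ n) (z : F.obj (op m)) :
    ∃ w : F.obj (op n), trans F hn w = trans F (by omega : a ≤ m) z :=
  hF a le_rfl _ ⟨trans F (by omega : b + a ≤ m) z, trans_trans F _ _ z⟩ n hn

lemma IsInjective.app_trans_eq_zero {a d n m : ℕ} (γ : C ⟶ D) (hD : IsInjective D a d)
    (han : a ≤ n) (hnm : d + n ≤ m) (x : C.obj (op m))
    (hx : trans C (han.trans (by omega)) x = 0) : γ.app (op n) (trans C (by omega) x) = 0 := by
  rw [app_trans]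
  refine hD.trans_eq_zero han hnm _ ?_
  rw [← app_trans, hx, map_zero]

lemma app_trans_eq_zero_of_exact {a b c e m : ℕ} (α : A ⟶ B) (β : B ⟶ C)
    (hex : ∀ i : ℕ, Function.Exact (α.app (op i)) (β.app (op i)))
    (hA : IsSurjective A a b) (hB : IsInjective B a c) (hae : a ≤ e) (hm : a + b ≤ m)
    (hcm : c + e ≤ m) (y : B.obj (op m)) (hy : β.app (op (a + b)) (trans B hm y) = 0) :
    β.app (op e) (trans B (by omega : e ≤ m) y) = 0 := by
  obtain ⟨z, hz⟩ := (hex (a + b) _).mp hy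
  obtain ⟨w, hw⟩ := hA.exists_trans_eq le_rfl (hae.trans (by omega : e ≤ m)) z
  have hyw : trans B (by omega : e ≤ m) y = trans B (by omega : e ≤ m) (α.app (op m) w) := by
    refine hB.trans_eq_of_trans_eq hae hcm ?_
    rw [← app_trans, hw, app_trans, hz, trans_trans]
  rw [hyw, ← app_trans]
  exact (hex e).apply_apply_eq_zero _

end InvSys

theorem invSys_five_lemma_injective_general
    (A B C D : ℕᵒᵖ ⥤ AddCommGrpCat)
    (α : A ⟶ B) (β : B ⟶ C) (γ : C ⟶ D)
    (hexB : ∀ i : ℕ, Function.Exact (α.app (op i)) (β.app (op i)))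
    (hexC : ∀ i : ℕ, Function.Exact (β.app (op i)) (γ.app (op i)))
    (a b c d : ℕ)
    (hA : InvSys.IsSurjective A a b)
    (hB : InvSys.IsInjective B a c)
    (hD : InvSys.IsInjective D (a + b) d) :
    InvSys.IsInjective C (a + b) (c + d) := by
  intro e he x hx
  obtain ⟨y, hy⟩ := (hexC (c + e) _).mp
    (hD.app_trans_eq_zero γ (by omega) (by omega : d + (c + e) ≤ c + d + e) x hx)
  have hβy : β.app (op (a + b)) (InvSys.trans B (by omega : a + b ≤ c + e) y) = 0 := by
    rw [InvSys.app_trans, hy, InvSys.trans_trans]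
    exact hx
  have hβye := InvSys.app_trans_eq_zero_of_exact α β hexB hA hB (by omega) _ le_rfl y hβy
  rwa [InvSys.app_trans, hy, InvSys.trans_trans] at hβye

/-- Generalized five lemma for inverse systems (injectivity part): given a commutative
ladder of inverse systems of abelian groups with exact rows
`A_i → B_i → C_i → D_i → E_i`, if `(A_i)` is `a,b`-surjective, `(B_i)` is `a,c`-injective and
`(D_i)` is `(a+b),d`-injective, then `(C_i)` is `(a+b),(c+d)`-injective. -/
theorem invSys_five_lemma_injective
    (A B C D E : ℕᵒᵖ ⥤ AddCommGrpCat)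
    (α : A ⟶ B) (β : B ⟶ C) (γ : C ⟶ D) (δ : D ⟶ E)
    (hexB : ∀ i : ℕ, Function.Exact (α.app (op i)) (β.app (op i)))
    (hexC : ∀ i : ℕ, Function.Exact (β.app (op i)) (γ.app (op i)))
    (hexD : ∀ i : ℕ, Function.Exact (γ.app (op i)) (δ.app (op i)))
    (a b c d : ℕ)
    (hA : InvSys.IsSurjective A a b)
    (hB : InvSys.IsInjective B a c)
    (hD : InvSys.IsInjective D (a + b) d) :
    InvSys.IsInjective C (a + b) (c + d) :=
  invSys_five_lemma_injective_general A B C D α β γ hexB hexC a b c d hA hB hD
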